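/- arXiv:1901.01004 — 3 statements merged into one kernel-verified Lean document; each statement's English description precedes it below -/
import Mathlib

section
/- Let μ be as in the context with parameters a > 1, ε ∈ (0,1), k ∈ (0,1], s = (1+ε)/2, and assume (a+1)^{2k} ≥ 2. Then for all r > 0 with r ≠ a, one has 2 r^{−1} μ(r) − μ'(r) ≥ 0. -/
/-!
Below `a`, after the substitution `x = (r + 1)⁻¹` the inequality becomes `k (1 - x) ≤ 1 - x ^ (2k)`,
which follows from Bernoulli's inequality `x ^ k ≤ 1 - k (1 - x)` (valid as `k ≤ 1`) and
`x ^ (2k) ≤ x ^ k`. Above `a`, the tail `(r + 1) ^ (1 - 2s)` is decreasing, so `μ(r) ≥ (a + 1) ^ (2k) - 1 ≥ 1`,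
while `μ'(r) ≤ (r + 1)⁻¹ < r⁻¹` because `1 ≤ 2s ≤ 2`.
-/

open Real

/-- The weight function `μ` from Section 2. -/
noncomputable def mu (a s k r : ℝ) : ℝ :=
  if r ≤ a then (r + 1) ^ (2 * k) - 1
  else (a + 1) ^ (2 * k) - 1 + (a + 1) ^ (-2 * s + 1) - (r + 1) ^ (-2 * s + 1)

/-- The derivative of the weight function `μ` (for `r ≠ a`). -/
noncomputable def muDeriv (a s k r : ℝ) : ℝ :=
  if r < a then 2 * k * (r + 1) ^ (2 * k - 1)
  else (2 * s - 1) * (r + 1) ^ (-(2 * s))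

theorem mul_one_sub_le_one_sub_rpow_two_mul {x k : ℝ} (hx0 : 0 ≤ x) (hx1 : x ≤ 1)
    (hk0 : 0 ≤ k) (hk1 : k ≤ 1) : k * (1 - x) ≤ 1 - x ^ (2 * k) := by
  have bernoulli : x ^ k ≤ 1 + k * (x - 1) := by
    simpa using rpow_one_add_le_one_add_mul_self (s := x - 1) (by linarith) hk0 hk1
  have : x ^ (2 * k) ≤ x ^ k := rpow_le_rpow_of_exponent_ge' hx0 hx1 hk0 (by linarith)
  linarith

theorem mul_sub_one_mul_rpow_le {t k : ℝ} (ht : 1 ≤ t) (hk0 : 0 ≤ k) (hk1 : k ≤ 1) :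
    k * (t - 1) * t ^ (2 * k - 1) ≤ t ^ (2 * k) - 1 := by
  have ht0 : 0 < t := by linarith
  have key := mul_one_sub_le_one_sub_rpow_two_mul (inv_nonneg.2 ht0.le) (inv_le_one_of_one_le₀ ht)
    hk0 hk1
  have hpow : 0 < t ^ (2 * k) := rpow_pos_of_pos ht0 _
  calc k * (t - 1) * t ^ (2 * k - 1) = t ^ (2 * k) * (k * (1 - t⁻¹)) := by
        rw [rpow_sub ht0, rpow_one]; field_simp
    _ ≤ t ^ (2 * k) * (1 - t⁻¹ ^ (2 * k)) := mul_le_mul_of_nonneg_left key hpow.le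
    _ = t ^ (2 * k) - 1 := by
        rw [inv_rpow ht0.le, mul_sub, mul_inv_cancel₀ hpow.ne', mul_one]

theorem muDeriv_le_two_inv_mul_mu_of_lt {a s k r : ℝ} (hr : 0 < r) (hra : r < a)
    (hk0 : 0 ≤ k) (hk1 : k ≤ 1) : muDeriv a s k r ≤ 2 * r⁻¹ * mu a s k r := by
  rw [mu, muDeriv, if_pos hra.le, if_pos hra]
  have key := mul_sub_one_mul_rpow_le (t := r + 1) (by linarith) hk0 hk1
  rw [add_sub_cancel_right] at key
  calc 2 * k * (r + 1) ^ (2 * k - 1) = 2 * r⁻¹ * (k * r * (r + 1) ^ (2 * k - 1)) := by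
        field_simp
    _ ≤ 2 * r⁻¹ * ((r + 1) ^ (2 * k) - 1) := by gcongr

theorem one_le_mu_of_lt {a s k r : ℝ} (ha : 0 < a + 1) (hs : 1 ≤ 2 * s)
    (hbig : 2 ≤ (a + 1) ^ (2 * k)) (hra : a < r) : 1 ≤ mu a s k r := by
  rw [mu, if_neg hra.not_ge]
  have : (r + 1) ^ (-2 * s + 1) ≤ (a + 1) ^ (-2 * s + 1) :=
    rpow_le_rpow_of_nonpos ha (by linarith) (by linarith)
  linarith

theorem muDeriv_le_inv_of_le {a s k r : ℝ} (hr : 0 < r) (hra : a ≤ r) (hs1 : 1 ≤ 2 * s)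
    (hs2 : 2 * s ≤ 2) : muDeriv a s k r ≤ r⁻¹ := by
  rw [muDeriv, if_neg hra.not_gt]
  calc (2 * s - 1) * (r + 1) ^ (-(2 * s)) ≤ 1 * (r + 1) ^ (-1 : ℝ) := by
        gcongr ?_ * ?_
        · linarith
        · exact rpow_le_rpow_of_exponent_le (by linarith) (by linarith)
    _ ≤ r⁻¹ := by
        rw [one_mul, rpow_neg_one]
        exact inv_anti₀ hr (by linarith)

/-- Lemma 2.1, inequality (2.2): `2 r⁻¹ μ(r) - μ'(r) ≥ 0` for all `r > 0`, `r ≠ a`. -/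
theorem mu_ineq_one (a ε k s : ℝ) (ha : 1 < a) (hε0 : 0 < ε) (hε1 : ε < 1)
    (hk0 : 0 < k) (hk1 : k ≤ 1) (hs : s = (1 + ε) / 2)
    (hbig : 2 ≤ (a + 1) ^ (2 * k)) :
    ∀ r : ℝ, 0 < r → r ≠ a → 2 * r⁻¹ * mu a s k r - muDeriv a s k r ≥ 0 := by
  intro r hr hra
  rw [ge_iff_le, sub_nonneg]
  rcases hra.lt_or_gt with hlt | hgt
  · exact muDeriv_le_two_inv_mul_mu_of_lt hr hlt hk0.le hk1
  · have hs1 : 1 ≤ 2 * s := by rw [hs]; linarith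
    have hmu := one_le_mu_of_lt (by linarith) hs1 hbig hgt
    have hinv : 0 < r⁻¹ := inv_pos.2 hr
    calc muDeriv a s k r ≤ r⁻¹ := muDeriv_le_inv_of_le hr hgt.le hs1 (by rw [hs]; linarith)
      _ ≤ 2 * r⁻¹ * mu a s k r := by nlinarith
end

section
/- Let μ be as in the context with parameters a > 1, ε ∈ (0,1), k ∈ (0,1], s = (1+ε)/2, and assume ε ≤ 2k and (a+1)^{4k} ≤ 2 a^{4k}. Then for all r > 0 with r ≠ a, one has μ(r)² / μ'(r) ≤ 2 ε^{−1} a^{4k} (r+1)^{2s}. -/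
open Real

/-- Lemma 2.1, inequality (2.4): `μ(r)²/μ'(r) ≤ 2 ε⁻¹ a^{4k} (r+1)^{2s}` for all `r > 0`,
`r ≠ a`. -/
theorem mu_ineq_three (a ε k s : ℝ) (ha : 1 < a) (hε0 : 0 < ε) (hε1 : ε < 1)
    (hk0 : 0 < k) (hk1 : k ≤ 1) (hs : s = (1 + ε) / 2)
    (hεk : ε ≤ 2 * k) (hbig : (a + 1) ^ (4 * k) ≤ 2 * a ^ (4 * k)) :
    ∀ r : ℝ, 0 < r → r ≠ a →
      (mu a s k r) ^ 2 / muDeriv a s k r ≤ 2 * ε⁻¹ * a ^ (4 * k) * (r + 1) ^ (2 * s) := by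
  intro r hr hrne
  have hr1 : (1:ℝ) < r + 1 := by linarith
  have hr0 : (0:ℝ) < r + 1 := by linarith
  have ha0 : (0:ℝ) < a + 1 := by linarith
  have ha1 : (1:ℝ) < a + 1 := by linarith
  have ha0' : (0:ℝ) < a := by linarith
  have hs1 : 2 * s - 1 = ε := by rw [hs]; ring
  have ha4 : (0:ℝ) < a ^ (4 * k) := Real.rpow_pos_of_pos ha0' _
  rcases lt_or_gt_of_ne hrne with h | h
  · -- r < a
    have hmu : mu a s k r = (r+1)^(2*k) - 1 := by rw [mu, if_pos h.le]
    have hd : muDeriv a s k r = 2*k*(r+1)^(2*k-1) := by rw [muDeriv, if_pos h]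
    have hd0 : (0:ℝ) < 2*k*(r+1)^(2*k-1) := by positivity
    rw [hmu, hd, div_le_iff₀ hd0]
    have hone : (1:ℝ) ≤ (r+1)^(2*k) := Real.one_le_rpow hr1.le (by positivity)
    have h1 : ((r+1)^(2*k) - 1)^2 ≤ (r+1)^(4*k) := by
      have h4 : (r+1)^(4*k) = ((r+1)^(2*k))^2 := by
        rw [← Real.rpow_natCast ((r+1)^(2*k)) 2, ← Real.rpow_mul hr0.le]
        norm_num; ring_nf
      rw [h4]
      nlinarith
    have key : (r+1)^(4*k) ≤ 2 * a^(4*k) * (r+1)^(2*s+2*k-1) := by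
      have e1 : (r+1)^(4*k) = (r+1)^(2*k-ε) * (r+1)^(2*s+2*k-1) := by
        rw [← Real.rpow_add hr0]; congr 1; linarith
      rw [e1]
      have h2 : (r+1)^(2*k-ε) ≤ (a+1)^(2*k-ε) :=
        Real.rpow_le_rpow hr0.le (by linarith) (by linarith)
      have h3 : (a+1)^(2*k-ε) ≤ (a+1)^(4*k) :=
        Real.rpow_le_rpow_of_exponent_le ha1.le (by linarith)
      have h5 : (0:ℝ) < (r+1)^(2*s+2*k-1) := Real.rpow_pos_of_pos hr0 _
      nlinarith
    have hkε : (1:ℝ) ≤ 2*k*ε⁻¹ := by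
      have h6 : (1:ℝ) ≤ 2*k/ε := (one_le_div hε0).mpr hεk
      rw [div_eq_mul_inv] at h6; linarith
    calc ((r+1)^(2*k) - 1)^2 ≤ 2 * a^(4*k) * (r+1)^(2*s+2*k-1) := le_trans h1 key
      _ ≤ (2*k*ε⁻¹) * (2 * a^(4*k) * (r+1)^(2*s+2*k-1)) := by
          nlinarith [Real.rpow_pos_of_pos hr0 (2*s+2*k-1)]
      _ = 2 * ε⁻¹ * a ^ (4 * k) * (r + 1) ^ (2 * s) * (2 * k * (r + 1) ^ (2 * k - 1)) := by
          rw [show (2*s+2*k-1) = 2*s + (2*k-1) by ring, Real.rpow_add hr0]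
          ring
  · -- r > a
    have hmu : mu a s k r = (a+1)^(2*k) - 1 + (a+1)^(-2*s+1) - (r+1)^(-2*s+1) := by
      rw [mu, if_neg (not_le.mpr h)]
    have hd : muDeriv a s k r = ε * (r+1)^(-(2*s)) := by
      rw [muDeriv, if_neg (not_lt.mpr h.le), hs1]
    have hd0 : (0:ℝ) < ε * (r+1)^(-(2*s)) := by positivity
    rw [hmu, hd, div_le_iff₀ hd0]
    have honea : (1:ℝ) ≤ (a+1)^(2*k) := Real.one_le_rpow ha1.le (by positivity)
    have hmono : (r+1)^(-2*s+1) ≤ (a+1)^(-2*s+1) :=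
      Real.rpow_le_rpow_of_nonpos ha0 (by linarith) (by nlinarith)
    have hle1 : (a+1)^(-2*s+1) ≤ 1 :=
      Real.rpow_le_one_of_one_le_of_nonpos ha1.le (by nlinarith)
    have hge0 : (0:ℝ) ≤ (r+1)^(-2*s+1) := (Real.rpow_pos_of_pos hr0 _).le
    have hmu0 : (0:ℝ) ≤ (a+1)^(2*k) - 1 + (a+1)^(-2*s+1) - (r+1)^(-2*s+1) := by linarith
    have hmuU : (a+1)^(2*k) - 1 + (a+1)^(-2*s+1) - (r+1)^(-2*s+1) ≤ (a+1)^(2*k) := by linarith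
    have hsq : ((a+1)^(2*k) - 1 + (a+1)^(-2*s+1) - (r+1)^(-2*s+1))^2 ≤ (a+1)^(4*k) := by
      have h4 : (a+1)^(4*k) = ((a+1)^(2*k))^2 := by
        rw [← Real.rpow_natCast ((a+1)^(2*k)) 2, ← Real.rpow_mul ha0.le]
        norm_num; ring_nf
      rw [h4]; nlinarith
    calc ((a+1)^(2*k) - 1 + (a+1)^(-2*s+1) - (r+1)^(-2*s+1))^2
        ≤ 2 * a^(4*k) := le_trans hsq hbig
      _ = 2 * ε⁻¹ * a ^ (4 * k) * (r + 1) ^ (2 * s) * (ε * (r + 1) ^ (-(2 * s))) := by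
          have hrr : (r+1)^(2*s) * (r+1)^(-(2*s)) = 1 := by
            rw [← Real.rpow_add hr0]; norm_num
          have hεε : ε⁻¹ * ε = 1 := inv_mul_cancel₀ hε0.ne'
          rw [show 2 * ε⁻¹ * a ^ (4 * k) * (r + 1) ^ (2 * s) * (ε * (r + 1) ^ (-(2 * s)))
              = 2 * a^(4*k) * (ε⁻¹*ε) * ((r+1)^(2*s)*(r+1)^(-(2*s))) from by ring, hrr, hεε]
          ring
end

section
/- Let m₀, T₀, τ₀ > 0 and t₀ > 1 be fixed. For 0 < h < 1 set ε = (log(1/h))^{−1}, m = m₀ + εT₀, a = h^{−m}, k = 1 − εt₀, τ = τ₀ h^{−1/3}, and define φ as in the context. Then there exist constants C > 0 and h₀ ∈ (0,1), depending only on m₀, T₀, t₀, τ₀, such that for all 0 < h ≤ h₀ and all r ≥ 0, φ(r) ≤ C h^{−1/3} log(1/h). -/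
/-!
Since `φ' ≤ τ (t+1)^{-k}` on `[0, a]` and `φ'` vanishes beyond `a`, we get
`φ(r) ≤ τ (a+1)^{1-k} / (1-k)`. Here `1 - k = ε t₀`, so `1/(1-k) = log(1/h) / t₀`,
while `(a+1)^{ε t₀} ≤ 2 a^{ε t₀} = 2 exp((m₀ + ε T₀) t₀)` stays bounded: the exponent
`ε` exactly cancels the logarithmic size of `a = h^{-m}`.
-/

open Real

/-- The derivative of the phase function: `φ΄(t) = τ((t+1)^{-k} - (a+1)^{-k})` for
`0 ≤ t ≤ a` and `φ΄(t) = 0` for `t ≥ a`. -/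
noncomputable def phiDeriv (τ a k t : ℝ) : ℝ :=
  if t ≤ a then τ * ((t + 1) ^ (-k) - (a + 1) ^ (-k)) else 0

/-- The phase function `φ(r) = ∫₀^r φ΄(t) dt`. -/
noncomputable def phi (τ a k r : ℝ) : ℝ := ∫ t in (0 : ℝ)..r, phiDeriv τ a k t

open MeasureTheory Set intervalIntegral

lemma continuousOn_add_one_rpow (k : ℝ) {x y : ℝ} (hx : 0 ≤ x) (hy : 0 ≤ y) :
    ContinuousOn (fun t : ℝ => (t + 1) ^ (-k)) (uIcc x y) := by
  refine ContinuousOn.rpow_const (f := fun t => t + 1) (by fun_prop) fun t ht => Or.inl ?_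
  rcases mem_uIcc.mp ht with ⟨h, _⟩ | ⟨h, _⟩ <;> linarith

lemma phiDeriv_eq_indicator (τ a k : ℝ) :
    phiDeriv τ a k = (Iic a).indicator fun t => τ * ((t + 1) ^ (-k) - (a + 1) ^ (-k)) := by
  ext t
  simp [phiDeriv, indicator_apply]

lemma phiDeriv_intervalIntegrable (τ a k : ℝ) {x y : ℝ} (hx : 0 ≤ x) (hy : 0 ≤ y) :
    IntervalIntegrable (phiDeriv τ a k) volume x y := by
  have hcont : ContinuousOn (fun t => τ * ((t + 1) ^ (-k) - (a + 1) ^ (-k))) (uIcc x y) :=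
    continuousOn_const.mul ((continuousOn_add_one_rpow k hx hy).sub continuousOn_const)
  rw [phiDeriv_eq_indicator, intervalIntegrable_iff]
  exact (intervalIntegrable_iff.mp hcont.intervalIntegrable).indicator measurableSet_Iic

lemma phiDeriv_eq_zero_of_le {τ a k t : ℝ} (hat : a ≤ t) : phiDeriv τ a k t = 0 := by
  rcases hat.eq_or_lt with rfl | hlt
  · simp [phiDeriv]
  · simp [phiDeriv, not_le.mpr hlt]

lemma phiDeriv_le_mul_rpow {τ a k t : ℝ} (hτ : 0 ≤ τ) (ha : 0 ≤ a) (ht : 0 ≤ t) :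
    phiDeriv τ a k t ≤ τ * (t + 1) ^ (-k) := by
  have hpos : 0 ≤ (t + 1) ^ (-k) := rpow_nonneg (by linarith) _
  unfold phiDeriv
  split_ifs
  · nlinarith [rpow_nonneg (show (0 : ℝ) ≤ a + 1 by linarith) (-k)]
  · positivity

lemma phi_eq_phi_min {τ a k r : ℝ} (ha : 0 ≤ a) (hr : 0 ≤ r) :
    phi τ a k r = phi τ a k (min r a) := by
  rcases le_total r a with h | h
  · rw [min_eq_left h]
  · rw [min_eq_right h, phi, phi, ← integral_add_adjacent_intervals
      (phiDeriv_intervalIntegrable τ a k le_rfl ha) (phiDeriv_intervalIntegrable τ a k ha hr),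
      integral_congr (a := a) (b := r) (g := 0) fun t ht =>
        phiDeriv_eq_zero_of_le (by rw [uIcc_of_le h] at ht; exact ht.1)]
    simp

lemma integral_add_one_rpow {k : ℝ} (hk : k < 1) (R : ℝ) :
    ∫ t in (0 : ℝ)..R, (t + 1) ^ (-k) = ((R + 1) ^ (1 - k) - 1) / (1 - k) := by
  rw [integral_comp_add_right (fun t : ℝ => t ^ (-k)), integral_rpow (Or.inl (by linarith)),
    show -k + 1 = 1 - k by ring]
  norm_num

lemma phi_le_mul_rpow_div {τ a k r : ℝ} (hτ : 0 ≤ τ) (ha : 0 ≤ a) (hk : k < 1)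
    (hr : 0 ≤ r) :
    phi τ a k r ≤ τ * ((a + 1) ^ (1 - k) / (1 - k)) := by
  set R := min r a
  have hR : 0 ≤ R := le_min hr ha
  have hRa : R ≤ a := min_le_right r a
  have hk' : 0 < 1 - k := by linarith
  calc phi τ a k r = phi τ a k R := phi_eq_phi_min ha hr
    _ ≤ ∫ t in (0 : ℝ)..R, τ * (t + 1) ^ (-k) :=
        integral_mono_on hR (phiDeriv_intervalIntegrable τ a k le_rfl hR)
          (continuousOn_const.mul (continuousOn_add_one_rpow k le_rfl hR)).intervalIntegrable
          fun t ht => phiDeriv_le_mul_rpow hτ ha ht.1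
    _ = τ * (((R + 1) ^ (1 - k) - 1) / (1 - k)) := by
        rw [intervalIntegral.integral_const_mul, integral_add_one_rpow hk]
    _ ≤ τ * ((a + 1) ^ (1 - k) / (1 - k)) := by
        gcongr
        linarith [rpow_le_rpow (by linarith) (by linarith : R + 1 ≤ a + 1) hk'.le]

lemma rpow_mul_inv_log_one_div {h : ℝ} (hh : 0 < h) (hh1 : h ≠ 1) (x : ℝ) :
    h ^ (x * (log (1 / h))⁻¹) = exp (-x) := by
  have hlog : log h ≠ 0 := log_ne_zero_of_pos_of_ne_one hh hh1
  rw [rpow_def_of_pos hh, one_div, log_inv]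
  field_simp

lemma add_one_rpow_le_two_mul_rpow {a s : ℝ} (ha : 1 ≤ a) (hs₀ : 0 ≤ s) (hs₁ : s ≤ 1) :
    (a + 1) ^ s ≤ 2 * a ^ s :=
  calc (a + 1) ^ s ≤ (2 * a) ^ s := rpow_le_rpow (by linarith) (by linarith) hs₀
    _ = 2 ^ s * a ^ s := mul_rpow zero_le_two (by linarith)
    _ ≤ 2 * a ^ s := by
        gcongr
        simpa using rpow_le_rpow_of_exponent_le one_le_two hs₁

lemma rpow_neg_add_one_rpow_inv_log_mul_le {h m t : ℝ} (hh : 0 < h) (hh1 : h < 1)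
    (hm : 0 ≤ m) (ht₀ : 0 ≤ t) (ht : t ≤ log (1 / h)) :
    (h ^ (-m) + 1) ^ ((log (1 / h))⁻¹ * t) ≤ 2 * exp (m * t) := by
  have hL : 0 < log (1 / h) := log_pos (by rw [one_div]; exact one_lt_inv₀ hh |>.mpr hh1)
  calc (h ^ (-m) + 1) ^ ((log (1 / h))⁻¹ * t) ≤ 2 * (h ^ (-m)) ^ ((log (1 / h))⁻¹ * t) :=
        add_one_rpow_le_two_mul_rpow (one_le_rpow_of_pos_of_le_one_of_nonpos hh hh1.le
          (by linarith)) (by positivity) (by rwa [inv_mul_le_one₀ hL])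
    _ = 2 * exp (m * t) := by
        rw [← rpow_mul hh.le,
          show -m * ((log (1 / h))⁻¹ * t) = (-(m * t)) * (log (1 / h))⁻¹ by ring,
          rpow_mul_inv_log_one_div hh hh1.ne, neg_neg]

/-- Lemma 2.2 (case (1.4)): with `ε = (log(1/h))⁻¹`, `m = m₀ + εT₀`, `a = h^{-m}`,
`k = 1 - εt₀` and `τ = τ₀ h^{-1/3}`, there are `C > 0` and `h₀ ∈ (0,1)`, depending only
on `m₀, T₀, t₀, τ₀`, such that `φ(r) ≤ C h^{-1/3} log(1/h)` for all `0 < h ≤ h₀`, `r ≥ 0`. -/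
theorem phi_bound_regime_one (m₀ T₀ t₀ τ₀ : ℝ)
    (hm₀ : 0 < m₀) (hT₀ : 0 < T₀) (ht₀ : 1 < t₀) (hτ₀ : 0 < τ₀) :
    ∃ C > (0 : ℝ), ∃ h₀ : ℝ, 0 < h₀ ∧ h₀ < 1 ∧ ∀ h : ℝ, 0 < h → h ≤ h₀ →
      ∀ r : ℝ, 0 ≤ r →
        phi (τ₀ * h ^ (-(1 : ℝ) / 3)) (h ^ (-(m₀ + (Real.log (1 / h))⁻¹ * T₀)))
            (1 - (Real.log (1 / h))⁻¹ * t₀) r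
          ≤ C * h ^ (-(1 : ℝ) / 3) * Real.log (1 / h) := by
  refine ⟨2 * τ₀ * exp ((m₀ + T₀) * t₀) / t₀, by positivity, exp (-t₀), exp_pos _,
    exp_lt_one_iff.mpr (by linarith), fun h hh hhle r hr => ?_⟩
  have hh1 : h < 1 := hhle.trans_lt (exp_lt_one_iff.mpr (by linarith))
  have htL : t₀ ≤ log (1 / h) := by
    rw [one_div, log_inv, le_neg]
    simpa using log_le_log hh hhle
  set L := log (1 / h)
  set τ := τ₀ * h ^ (-(1 : ℝ) / 3)
  have hL : 0 < L := by linarith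
  have hm : 0 ≤ m₀ + L⁻¹ * T₀ := by positivity
  calc _ ≤ τ * ((h ^ (-(m₀ + L⁻¹ * T₀)) + 1) ^ (1 - (1 - L⁻¹ * t₀))
          / (1 - (1 - L⁻¹ * t₀))) :=
        phi_le_mul_rpow_div (by positivity) (by positivity)
          (by linarith [show 0 < L⁻¹ * t₀ by positivity]) hr
    _ = τ * ((h ^ (-(m₀ + L⁻¹ * T₀)) + 1) ^ (L⁻¹ * t₀) * (L / t₀)) := by
        rw [sub_sub_cancel]
        field_simp
    _ ≤ τ * (2 * exp ((m₀ + L⁻¹ * T₀) * t₀) * (L / t₀)) := by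
        gcongr
        exact rpow_neg_add_one_rpow_inv_log_mul_le hh hh1 hm (by linarith) htL
    _ ≤ τ * (2 * exp ((m₀ + T₀) * t₀) * (L / t₀)) := by
        gcongr
        exact mul_le_of_le_one_left hT₀.le (inv_le_one_of_one_le₀ (by linarith))
    _ = 2 * τ₀ * exp ((m₀ + T₀) * t₀) / t₀ * h ^ (-(1 : ℝ) / 3) * L := by ring
end
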